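/- (Information entropy increases through the CP-model.) Let X_1, …, X_N, Z, D_1, …, D_N be random variables on a probability space taking values in finite sets. Assume (i) X_1, …, X_N are mutually conditionally independent given Z, and (ii) for each i, X_i and Z are conditionally independent given D_i. Then the entropy of the joint variable X = (X_1,…,X_N) satisfies H(X) ≥ Σ_{i=1}^N H(X_i | D_i). -/

import Mathlib

/-!
Since `Xᵢ` and `Z` are conditionally independent given `Dᵢ`, `H(Xᵢ | Dᵢ) = H(Xᵢ | Z, Dᵢ)`, and
conditioning on more can only lower entropy, so `H(Xᵢ | Dᵢ) ≤ H(Xᵢ | Z)`. Mutual conditional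
independence splits `H(X | Z)` as `∑ i, H(Xᵢ | Z)`, and `H(X | Z) ≤ H(X)`.

Both inequalities are instances of `H(X | Y, W) ≤ H(X | Y)`. The gap `H(X | Y) - H(X | Y, W)` is
`∑ p log (p / q)` for the joint law `p(x, y, w)` against `q(x, y, w) = p(y, w) p(x, y) / p(y)`,
which also has total mass one, so it is nonnegative by Gibbs' inequality `p log (p / q) ≥ p - q`.
-/

open MeasureTheory

noncomputable def pr {Ω : Type*} [MeasurableSpace Ω] (μ : Measure Ω) (s : Set Ω) : ℝ :=
  (μ s).toReal

/-- Natural logarithm; `0 log 0 = 0` since `Real.log 0 = 0`. -/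
noncomputable def entropy {Ω A : Type*} [MeasurableSpace Ω] [Fintype A]
    (μ : Measure Ω) (X : Ω → A) : ℝ :=
  -∑ x : A, pr μ {ω | X ω = x} * Real.log (pr μ {ω | X ω = x})

noncomputable def condEntropy {Ω A B : Type*} [MeasurableSpace Ω] [Fintype A] [Fintype B]
    (μ : Measure Ω) (X : Ω → A) (Y : Ω → B) : ℝ :=
  ∑ y : B, pr μ {ω | Y ω = y} *
    (-∑ x : A, (pr μ {ω | X ω = x ∧ Y ω = y} / pr μ {ω | Y ω = y}) *
      Real.log (pr μ {ω | X ω = x ∧ Y ω = y} / pr μ {ω | Y ω = y}))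

open Real Finset

lemma sub_le_mul_log_div {a b : ℝ} (ha : 0 ≤ a) (hb : 0 ≤ b) (hab : 0 < a → 0 < b) :
    a - b ≤ a * log (a / b) := by
  rcases ha.eq_or_lt with rfl | ha
  · simpa using hb
  have key := one_sub_inv_le_log_of_pos (div_pos ha (hab ha))
  rw [inv_div] at key
  calc a - b = a * (1 - b / a) := by field_simp
    _ ≤ a * log (a / b) := by gcongr

lemma sub_mul_div_le_mul_log_div_sub {p a b c : ℝ} (hp : 0 ≤ p) (ha : p ≤ a) (hb : p ≤ b)
    (hc : b ≤ c) : p - a * b / c ≤ p * log (p / a) - p * log (b / c) := by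
  rcases hp.eq_or_lt with rfl | hp
  · have : 0 ≤ a * b / c := by
      have := hb.trans hc
      positivity
    simpa using this
  have ha : 0 < a := hp.trans_le ha
  have hb : 0 < b := hp.trans_le hb
  have hc : 0 < c := hb.trans_le hc
  have hq : 0 < a * b / c := by positivity
  have hlog : p * log (p / a) - p * log (b / c) = p * log (p / (a * b / c)) := by
    rw [← mul_sub, ← log_div (by positivity) (by positivity)]
    congr 2
    field_simp
  rw [hlog]
  exact sub_le_mul_log_div hp.le hq.le fun _ => hq

section Probability

variable {Ω α β γ : Type*} [MeasurableSpace Ω]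

lemma pr_nonneg (μ : Measure Ω) (s : Set Ω) : 0 ≤ pr μ s := ENNReal.toReal_nonneg

variable {μ : Measure Ω}

lemma pr_mono [IsFiniteMeasure μ] {s t : Set Ω} (h : s ⊆ t) : pr μ s ≤ pr μ t :=
  measureReal_mono h

variable [Fintype α] [Fintype β] [Fintype γ]

lemma sum_pr_eq_and [IsFiniteMeasure μ] [MeasurableSpace β] [MeasurableSingletonClass β]
    {Y : Ω → β} (hY : Measurable Y) (P : Ω → Prop) :
    ∑ b, pr μ {ω | Y ω = b ∧ P ω} = pr μ {ω | P ω} := by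
  have h := sum_measureReal_preimage_singleton (μ := μ.restrict {ω | P ω}) univ
    (f := Y) fun b _ => hY (measurableSet_singleton b)
  simp only [coe_univ, Set.preimage_univ, measureReal_restrict_apply_univ] at h
  change _ = μ.real _
  rw [← h]
  refine sum_congr rfl fun b _ => ?_
  rw [measureReal_restrict_apply (hY (measurableSet_singleton b))]
  rfl

lemma sum_pr_eq [IsProbabilityMeasure μ] [MeasurableSpace β] [MeasurableSingletonClass β]
    {Y : Ω → β} (hY : Measurable Y) : ∑ b, pr μ {ω | Y ω = b} = 1 := by
  simpa [pr] using sum_pr_eq_and (μ := μ) hY fun _ => True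

lemma sum_pr_mul_comp [IsFiniteMeasure μ] [MeasurableSpace α] [MeasurableSingletonClass α]
    {V : Ω → α} (hV : Measurable V) (g : α → β) (P : Ω → Prop) (φ : β → ℝ) :
    ∑ a, pr μ {ω | V ω = a ∧ P ω} * φ (g a) = ∑ b, pr μ {ω | g (V ω) = b ∧ P ω} * φ b := by
  classical
  have hfiber : ∀ b, pr μ {ω | g (V ω) = b ∧ P ω} =
      ∑ a, if g a = b then pr μ {ω | V ω = a ∧ P ω} else 0 := fun b => by
    rw [← sum_pr_eq_and hV]
    refine sum_congr rfl fun a _ => ?_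
    have hset : {ω | V ω = a ∧ g (V ω) = b ∧ P ω} = {ω | V ω = a ∧ g a = b ∧ P ω} :=
      Set.ext fun ω => and_congr_right fun h => h ▸ Iff.rfl
    rw [hset]
    split_ifs with hab <;> simp [hab, pr]
  simp_rw [hfiber, sum_mul, ite_mul, zero_mul]
  rw [sum_comm]
  simp

lemma condEntropy_eq [IsFiniteMeasure μ] (X : Ω → α) (Y : Ω → β) :
    condEntropy μ X Y = -∑ x, ∑ y, pr μ {ω | X ω = x ∧ Y ω = y} *
      log (pr μ {ω | X ω = x ∧ Y ω = y} / pr μ {ω | Y ω = y}) := by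
  rw [condEntropy, sum_comm, ← sum_neg_distrib]
  refine sum_congr rfl fun y _ => ?_
  rw [mul_neg, mul_sum]
  congr 1
  refine sum_congr rfl fun x _ => ?_
  rcases (pr_nonneg μ {ω | Y ω = y}).eq_or_lt with h | h
  · have : pr μ {ω | X ω = x ∧ Y ω = y} = 0 :=
      le_antisymm (h ▸ pr_mono fun ω hω => hω.2) (pr_nonneg μ _)
    simp [this, ← h]
  · rw [← mul_assoc, mul_div_cancel₀ _ h.ne']

lemma condEntropy_const_unit [IsProbabilityMeasure μ] (X : Ω → α) :
    condEntropy μ X (fun _ => ()) = entropy μ X := by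
  simp [condEntropy, entropy, pr]

lemma condEntropy_unit_prod (X : Ω → α) (Y : Ω → β) :
    condEntropy μ X (fun ω => ((), Y ω)) = condEntropy μ X Y := by
  simp [condEntropy, Fintype.sum_prod_type]

theorem condEntropy_prod_le [IsProbabilityMeasure μ] [MeasurableSpace α]
    [MeasurableSingletonClass α] [MeasurableSpace β] [MeasurableSingletonClass β]
    [MeasurableSpace γ] [MeasurableSingletonClass γ] {X : Ω → α} {Y : Ω → β} {W : Ω → γ}
    (hX : Measurable X) (hY : Measurable Y) (hW : Measurable W) :
    condEntropy μ X (fun ω => (Y ω, W ω)) ≤ condEntropy μ X Y := by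
  set p := fun x y w => pr μ {ω | X ω = x ∧ Y ω = y ∧ W ω = w}
  set pXY := fun x y => pr μ {ω | X ω = x ∧ Y ω = y}
  set pYW := fun y w => pr μ {ω | Y ω = y ∧ W ω = w}
  set pY := fun y => pr μ {ω | Y ω = y}
  have hpXY : ∀ x y, ∑ w, p x y w = pXY x y := fun x y =>
    (sum_congr rfl fun w _ => congrArg (pr μ) (Set.ext fun _ => and_rotate.symm)).trans
      (sum_pr_eq_and hW _)
  have hpY_left : ∀ y, ∑ x, pXY x y = pY y := fun y => sum_pr_eq_and hX _
  have hpY_right : ∀ y, ∑ w, pYW y w = pY y := fun y =>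
    (sum_congr rfl fun w _ => congrArg (pr μ) (Set.ext fun _ => and_comm)).trans
      (sum_pr_eq_and hW _)
  have hp_total : ∑ x, ∑ y, ∑ w, p x y w = 1 := by
    simp_rw [hpXY]
    rw [sum_comm]
    simp_rw [hpY_left]
    exact sum_pr_eq hY
  have hq_total : ∑ x, ∑ y, ∑ w, pYW y w * pXY x y / pY y = 1 := by
    calc ∑ x, ∑ y, ∑ w, pYW y w * pXY x y / pY y = ∑ y, ∑ x, pY y * pXY x y / pY y := by
          rw [sum_comm]
          simp_rw [← sum_div, ← sum_mul, hpY_right]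
      _ = ∑ y, pY y := by
          simp_rw [← sum_div, ← mul_sum, hpY_left, mul_self_div_self]
      _ = 1 := sum_pr_eq hY
  have hgap : ∑ x, ∑ y, ∑ w, (p x y w - pYW y w * pXY x y / pY y) = 0 := by
    simp only [sum_sub_distrib, hp_total, hq_total, sub_self]
  rw [condEntropy_eq, condEntropy_eq, neg_le_neg_iff]
  simp only [Fintype.sum_prod_type, Prod.mk.injEq]
  calc ∑ x, ∑ y, pXY x y * log (pXY x y / pY y)
      = ∑ x, ∑ y, ∑ w, p x y w * log (pXY x y / pY y)
        + ∑ x, ∑ y, ∑ w, (p x y w - pYW y w * pXY x y / pY y) := by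
        rw [hgap, add_zero]
        simp only [← sum_mul, hpXY]
    _ ≤ ∑ x, ∑ y, ∑ w, p x y w * log (p x y w / pYW y w) := by
        simp only [← sum_add_distrib]
        gcongr with x _ y _ w _
        have := sub_mul_div_le_mul_log_div_sub (p := p x y w) (a := pYW y w) (b := pXY x y)
          (c := pY y) (pr_nonneg μ _) (pr_mono fun ω hω => hω.2)
          (pr_mono fun ω hω => ⟨hω.1, hω.2.1⟩) (pr_mono fun ω hω => hω.2)
        linarith

theorem condEntropy_le_entropy [IsProbabilityMeasure μ] [MeasurableSpace α]
    [MeasurableSingletonClass α] [MeasurableSpace β] [MeasurableSingletonClass β]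
    {X : Ω → α} {Y : Ω → β} (hX : Measurable X) (hY : Measurable Y) : condEntropy μ X Y ≤ entropy μ X := by
  simpa [condEntropy_const_unit, condEntropy_unit_prod] using
    condEntropy_prod_le (μ := μ) hX (measurable_const (a := ())) hY

theorem condEntropy_prod_eq_of_condIndep [IsFiniteMeasure μ] [MeasurableSpace γ]
    [MeasurableSingletonClass γ] {X : Ω → α} {Z : Ω → γ} {D : Ω → β} (hZ : Measurable Z)
    (hXZ : ∀ (x : α) (d : β) (z : γ), 0 < pr μ {ω | D ω = d} →
      pr μ {ω | (X ω = x ∧ Z ω = z) ∧ D ω = d} / pr μ {ω | D ω = d} =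
        (pr μ {ω | X ω = x ∧ D ω = d} / pr μ {ω | D ω = d}) *
        (pr μ {ω | Z ω = z ∧ D ω = d} / pr μ {ω | D ω = d})) :
    condEntropy μ X (fun ω => (Z ω, D ω)) = condEntropy μ X D := by
  rw [condEntropy_eq, condEntropy_eq]
  simp only [Fintype.sum_prod_type, Prod.mk.injEq]
  congr 1
  refine sum_congr rfl fun x _ => ?_
  rw [sum_comm]
  refine sum_congr rfl fun d _ => ?_
  have hXD : ∑ z, pr μ {ω | X ω = x ∧ Z ω = z ∧ D ω = d} = pr μ {ω | X ω = x ∧ D ω = d} :=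
    (sum_congr rfl fun z _ => congrArg (pr μ) (Set.ext fun _ => and_left_comm)).trans
      (sum_pr_eq_and hZ _)
  nth_rewrite 1 [← hXD]
  rw [sum_mul]
  refine sum_congr rfl fun z _ => ?_
  rcases (pr_nonneg μ {ω | X ω = x ∧ Z ω = z ∧ D ω = d}).eq_or_lt with h0 | hp
  · simp [← h0]
  have hD : 0 < pr μ {ω | D ω = d} := hp.trans_le (pr_mono fun ω hω => hω.2.2)
  have hZD : 0 < pr μ {ω | Z ω = z ∧ D ω = d} := hp.trans_le (pr_mono fun ω hω => hω.2)
  have h := hXZ x d z hD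
  simp only [and_assoc] at h
  congr 2
  rw [div_eq_div_iff hZD.ne' hD.ne']
  field_simp at h
  linear_combination h

theorem condEntropy_pi_eq_sum_of_iCondIndep [IsFiniteMeasure μ] {ι : Type*} [Fintype ι]
    [DecidableEq ι] {A : ι → Type*} [∀ i, Fintype (A i)] [∀ i, MeasurableSpace (A i)]
    [∀ i, MeasurableSingletonClass (A i)] {X : ∀ i, Ω → A i} (hX : ∀ i, Measurable (X i))
    (Z : Ω → γ)
    (hindep : ∀ (z : γ), 0 < pr μ {ω | Z ω = z} → ∀ x : ∀ i, A i,
      pr μ {ω | (∀ i, X i ω = x i) ∧ Z ω = z} / pr μ {ω | Z ω = z} =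
        ∏ i, (pr μ {ω | X i ω = x i ∧ Z ω = z} / pr μ {ω | Z ω = z})) :
    condEntropy μ (fun ω i => X i ω) Z = ∑ i, condEntropy μ (X i) Z := by
  have hlog : ∀ x z, pr μ {ω | (fun i => X i ω) = x ∧ Z ω = z} *
        log (pr μ {ω | (fun i => X i ω) = x ∧ Z ω = z} / pr μ {ω | Z ω = z}) =
      ∑ i, pr μ {ω | (fun i => X i ω) = x ∧ Z ω = z} *
        log (pr μ {ω | X i ω = x i ∧ Z ω = z} / pr μ {ω | Z ω = z}) := fun x z => by
    rw [← mul_sum]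
    rcases (pr_nonneg μ {ω | (fun i => X i ω) = x ∧ Z ω = z}).eq_or_lt with h0 | hp
    · simp [← h0]
    have hZ : 0 < pr μ {ω | Z ω = z} := hp.trans_le (pr_mono fun ω hω => hω.2)
    have hXi : ∀ i, 0 < pr μ {ω | X i ω = x i ∧ Z ω = z} := fun i =>
      hp.trans_le (pr_mono fun ω hω => ⟨congrFun hω.1 i, hω.2⟩)
    rw [← log_prod fun i _ => (div_pos (hXi i) hZ).ne', ← hindep z hZ x]
    simp only [funext_iff]
  simp_rw [condEntropy_eq, hlog, sum_neg_distrib, neg_inj]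
  -- reorder `∑ x, ∑ z, ∑ i` as `∑ i, ∑ z, ∑ x`, then sum `x` over the fibres of `x ↦ x i`
  rw [sum_comm]
  refine (sum_congr rfl fun z _ => sum_comm).trans ?_
  rw [sum_comm]
  refine sum_congr rfl fun i _ => Eq.trans ?_ sum_comm
  exact sum_congr rfl fun z _ => sum_pr_mul_comp (measurable_pi_lambda _ hX) (fun x => x i)
    (fun ω => Z ω = z) fun a => log (pr μ {ω | X i ω = a ∧ Z ω = z} / pr μ {ω | Z ω = z})

end Probability

theorem cp_model_entropy_increases_general {Ω : Type*} [MeasurableSpace Ω]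
    (μ : Measure Ω) [IsProbabilityMeasure μ]
    (N : ℕ)
    (A : Fin N → Type*) [∀ i, Fintype (A i)]
    [∀ i, MeasurableSpace (A i)] [∀ i, MeasurableSingletonClass (A i)]
    (B : Fin N → Type*) [∀ i, Fintype (B i)]
    [∀ i, MeasurableSpace (B i)] [∀ i, MeasurableSingletonClass (B i)]
    {E : Type*} [Fintype E] [MeasurableSpace E] [MeasurableSingletonClass E]
    (X : ∀ i, Ω → A i) (D : ∀ i, Ω → B i) (Z : Ω → E)
    (hX : ∀ i, Measurable (X i)) (hD : ∀ i, Measurable (D i)) (hZ : Measurable Z)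
    (hmutual : ∀ (z : E), 0 < pr μ {ω | Z ω = z} → ∀ x : ∀ i, A i,
      pr μ {ω | (∀ i, X i ω = x i) ∧ Z ω = z} / pr μ {ω | Z ω = z} =
        ∏ i, (pr μ {ω | X i ω = x i ∧ Z ω = z} / pr μ {ω | Z ω = z}))
    (hmarkov : ∀ i, ∀ (xi : A i) (d : B i) (z : E), 0 < pr μ {ω | D i ω = d} →
      pr μ {ω | (X i ω = xi ∧ Z ω = z) ∧ D i ω = d} / pr μ {ω | D i ω = d} =
        (pr μ {ω | X i ω = xi ∧ D i ω = d} / pr μ {ω | D i ω = d}) *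
        (pr μ {ω | Z ω = z ∧ D i ω = d} / pr μ {ω | D i ω = d})) :
    ∑ i, condEntropy μ (X i) (D i) ≤ entropy μ (fun ω => fun i => X i ω) :=
  calc ∑ i, condEntropy μ (X i) (D i)
      = ∑ i, condEntropy μ (X i) (fun ω => (Z ω, D i ω)) :=
        sum_congr rfl fun i _ => (condEntropy_prod_eq_of_condIndep hZ (hmarkov i)).symm
    _ ≤ ∑ i, condEntropy μ (X i) Z :=
        sum_le_sum fun i _ => condEntropy_prod_le (hX i) hZ (hD i)
    _ = condEntropy μ (fun ω i => X i ω) Z :=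
        (condEntropy_pi_eq_sum_of_iCondIndep hX Z hmutual).symm
    _ ≤ entropy μ (fun ω i => X i ω) := condEntropy_le_entropy (measurable_pi_lambda _ hX) hZ

/-- Information entropy increases through the CP-model. If `X_1, …, X_N` are
mutually conditionally independent given `Z`, and each `X_i` is conditionally independent
of `Z` given `D_i`, then `H((X_1,…,X_N)) ≥ Σ_i H(X_i | D_i)`. -/
theorem cp_model_entropy_increases {Ω : Type*} [MeasurableSpace Ω]
    (μ : Measure Ω) [IsProbabilityMeasure μ]
    (N : ℕ) (hN : 0 < N)
    (A : Fin N → Type*) [∀ i, Fintype (A i)]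
    [∀ i, MeasurableSpace (A i)] [∀ i, MeasurableSingletonClass (A i)]
    (B : Fin N → Type*) [∀ i, Fintype (B i)]
    [∀ i, MeasurableSpace (B i)] [∀ i, MeasurableSingletonClass (B i)]
    {E : Type*} [Fintype E] [MeasurableSpace E] [MeasurableSingletonClass E]
    (X : ∀ i, Ω → A i) (D : ∀ i, Ω → B i) (Z : Ω → E)
    (hX : ∀ i, Measurable (X i)) (hD : ∀ i, Measurable (D i)) (hZ : Measurable Z)
    (hmutual : ∀ (z : E), 0 < pr μ {ω | Z ω = z} → ∀ x : ∀ i, A i,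
      pr μ {ω | (∀ i, X i ω = x i) ∧ Z ω = z} / pr μ {ω | Z ω = z} =
        ∏ i, (pr μ {ω | X i ω = x i ∧ Z ω = z} / pr μ {ω | Z ω = z}))
    (hmarkov : ∀ i, ∀ (xi : A i) (d : B i) (z : E), 0 < pr μ {ω | D i ω = d} →
      pr μ {ω | (X i ω = xi ∧ Z ω = z) ∧ D i ω = d} / pr μ {ω | D i ω = d} =
        (pr μ {ω | X i ω = xi ∧ D i ω = d} / pr μ {ω | D i ω = d}) *
        (pr μ {ω | Z ω = z ∧ D i ω = d} / pr μ {ω | D i ω = d})) :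
    ∑ i, condEntropy μ (X i) (D i) ≤ entropy μ (fun ω => fun i => X i ω) :=
  cp_model_entropy_increases_general μ N A B X D Z hX hD hZ hmutual hmarkov
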